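/- arXiv:1507.06210 — 2 statements merged into one kernel-verified Lean document; each statement's English description precedes it below -/
import Mathlib

section
/- Let A, B ⊆ ℝⁿ be nonempty closed sets, ρ ≥ 0, ε ≥ 0, and suppose A ∩ ρ𝔹 ⊆ B + ε𝔹 and B ∩ ρ𝔹 ⊆ A + ε𝔹 (the graphs are (ρ,ε)-close). Let m := max(d(0,A), d(0,B)) and let ρ̄ ≥ 0 satisfy ρ ≥ 2ρ̄ + m. Then d_{ρ̄}(A, B) ≤ ε. -/
open scoped Pointwise

/-- Truncated set distance `d_r(A,B) = sup_{|z| ≤ r} |d(z,A) − d(z,B)|`. -/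
noncomputable def dTrunc {E : Type*} [NormedAddCommGroup E] (A B : Set E) (r : ℝ) : ℝ :=
  sSup ((fun z => |Metric.infDist z A - Metric.infDist z B|) '' Metric.closedBall (0 : E) r)

/-!
If `b` is a nearest point of `B` to `z`, then `|b - x| ≤ d(x, B) + 2|z - x|`, so `b` lies in the
ball where the `(ρ, ε)`-closeness applies and has a point of `A` within `ε`; hence
`d(z, A) ≤ |z - b| + ε = d(z, B) + ε`. Exchanging `A` and `B` bounds `|d(z, A) - d(z, B)|` by `ε`
for every `z` with `|z| ≤ ρ̄`.
-/

open Metric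

section

variable {E : Type*} [NormedAddCommGroup E]

lemma infDist_le_of_mem_add_closedBall_zero {A : Set E} {ε : ℝ} {y : E}
    (hy : y ∈ A + closedBall (0 : E) ε) : infDist y A ≤ ε := by
  obtain ⟨a, ha, e, he, rfl⟩ := hy
  calc infDist (a + e) A ≤ dist (a + e) a := infDist_le_dist_of_mem ha
    _ = ‖e‖ := dist_self_add_left e a
    _ ≤ ε := mem_closedBall_zero_iff.mp he

lemma infDist_le_infDist_add_of_inter_closedBall_subset [ProperSpace E] {A B : Set E}
    (hBcl : IsClosed B) (hBne : B.Nonempty) {x z : E} {ρ ε : ℝ}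
    (hBA : B ∩ closedBall x ρ ⊆ A + closedBall 0 ε) (hz : infDist x B + 2 * dist z x ≤ ρ) :
    infDist z A ≤ infDist z B + ε := by
  obtain ⟨b, hb, hzb⟩ := hBcl.exists_infDist_eq_dist hBne z
  have hbx : b ∈ closedBall x ρ := by
    have : infDist z B ≤ infDist x B + dist z x := infDist_le_infDist_add_dist
    rw [mem_closedBall]
    calc dist b x ≤ dist z b + dist z x := dist_triangle_left _ _ _
      _ ≤ ρ := by linarith
  calc infDist z A ≤ infDist b A + dist z b := infDist_le_infDist_add_dist
    _ ≤ ε + infDist z B := by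
      rw [hzb]
      gcongr
      exact infDist_le_of_mem_add_closedBall_zero (hBA ⟨hb, hbx⟩)
    _ = infDist z B + ε := add_comm _ _

lemma abs_infDist_sub_infDist_le_of_inter_closedBall_subset [ProperSpace E] {A B : Set E}
    (hAcl : IsClosed A) (hAne : A.Nonempty) (hBcl : IsClosed B) (hBne : B.Nonempty)
    {x z : E} {ρ ε : ℝ}
    (hAB : A ∩ closedBall x ρ ⊆ B + closedBall 0 ε) (hBA : B ∩ closedBall x ρ ⊆ A + closedBall 0 ε)
    (hz : max (infDist x A) (infDist x B) + 2 * dist z x ≤ ρ) :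
    |infDist z A - infDist z B| ≤ ε := by
  have hA := infDist_le_infDist_add_of_inter_closedBall_subset hBcl hBne hBA
    (by linarith [le_max_right (infDist x A) (infDist x B)])
  have hB := infDist_le_infDist_add_of_inter_closedBall_subset hAcl hAne hAB
    (by linarith [le_max_left (infDist x A) (infDist x B)])
  rw [abs_sub_le_iff]
  constructor <;> linarith

lemma dTrunc_le {A B : Set E} {r ε : ℝ} (hε : 0 ≤ ε)
    (h : ∀ z ∈ closedBall (0 : E) r, |infDist z A - infDist z B| ≤ ε) : dTrunc A B r ≤ ε :=
  Real.sSup_le (Set.forall_mem_image.mpr h) hε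

end

theorem stmt9_general (n : ℕ) (A B : Set (EuclideanSpace ℝ (Fin n)))
    (hAne : A.Nonempty) (hAcl : IsClosed A) (hBne : B.Nonempty) (hBcl : IsClosed B)
    (ρ ε ρbar : ℝ) (hε : 0 ≤ ε)
    (hAB : A ∩ Metric.closedBall (0 : EuclideanSpace ℝ (Fin n)) ρ ⊆
      B + Metric.closedBall (0 : EuclideanSpace ℝ (Fin n)) ε)
    (hBA : B ∩ Metric.closedBall (0 : EuclideanSpace ℝ (Fin n)) ρ ⊆
      A + Metric.closedBall (0 : EuclideanSpace ℝ (Fin n)) ε)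
    (hρge : ρ ≥ 2 * ρbar + max (Metric.infDist (0 : EuclideanSpace ℝ (Fin n)) A)
      (Metric.infDist (0 : EuclideanSpace ℝ (Fin n)) B)) :
    dTrunc A B ρbar ≤ ε := by
  refine dTrunc_le hε fun z hz => ?_
  have hz : dist z 0 ≤ ρbar := mem_closedBall.mp hz
  exact abs_infDist_sub_infDist_le_of_inter_closedBall_subset hAcl hAne hBcl hBne hAB hBA
    (by linarith)

theorem stmt9 (n : ℕ) (A B : Set (EuclideanSpace ℝ (Fin n)))
    (hAne : A.Nonempty) (hAcl : IsClosed A) (hBne : B.Nonempty) (hBcl : IsClosed B)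
    (ρ ε ρbar : ℝ) (hρ : 0 ≤ ρ) (hε : 0 ≤ ε) (hρbar : 0 ≤ ρbar)
    (hAB : A ∩ Metric.closedBall (0 : EuclideanSpace ℝ (Fin n)) ρ ⊆
      B + Metric.closedBall (0 : EuclideanSpace ℝ (Fin n)) ε)
    (hBA : B ∩ Metric.closedBall (0 : EuclideanSpace ℝ (Fin n)) ρ ⊆
      A + Metric.closedBall (0 : EuclideanSpace ℝ (Fin n)) ε)
    (hρge : ρ ≥ 2 * ρbar + max (Metric.infDist (0 : EuclideanSpace ℝ (Fin n)) A)
      (Metric.infDist (0 : EuclideanSpace ℝ (Fin n)) B)) :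
    dTrunc A B ρbar ≤ ε :=
  stmt9_general n A B hAne hAcl hBne hBcl ρ ε ρbar hε hAB hBA hρge
end

section
/- Let A, B ⊆ ℝⁿ be nonempty closed sets with m := max(d(0,A), d(0,B)). Suppose the graphs are (ρ,ε)-close for some ε ≥ 0 and all ρ satisfying ρ ≥ 2ρ̄ + m with a fixed ρ̄ ≥ 0, i.e., A ∩ ρ𝔹 ⊆ B + ε𝔹 and B ∩ ρ𝔹 ⊆ A + ε𝔹 for such ρ. Then the integrated set distance satisfies 𝐝(A,B) ≤ ε(1 − e^{−ρ̄}) + (ρ̄ + m + 2)e^{−ρ̄}. -/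
/-!
For `|z| ≤ r` both `d(z,A)` and `d(z,B)` lie in `[0, r + m]`, so `d_r(A,B) ≤ r + m`.
For `r ≤ ρ̄` the closeness at radius `ρ = 2ρ̄ + m` gives the sharper bound `d_r(A,B) ≤ ε`: a nearest
point `a ∈ A` to `z` satisfies `|a| ≤ |z| + d(z,A) ≤ 2ρ̄ + m`, so `a` is `ε`-close to `B` and
`d(z,B) ≤ d(z,A) + ε`, and symmetrically. Splitting `∫₀^∞ d_r e^{-r} dr` at `ρ̄` and integrating
`ε e^{-r}` on `(0, ρ̄]` and `(r + m) e^{-r}` on `(ρ̄, ∞)` gives the bound.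
-/

open scoped Pointwise

/-- Integrated set distance `𝐝(A,B) = ∫₀^∞ d_r(A,B) e^{−r} dr`. -/
noncomputable def dInt {E : Type*} [NormedAddCommGroup E] (A B : Set E) : ℝ :=
  ∫ r in Set.Ioi (0 : ℝ), dTrunc A B r * Real.exp (-r)

open Metric MeasureTheory Set Real Filter

section infDist

variable {E : Type*} [NormedAddCommGroup E]

theorem infDist_le_norm_add_infDist_zero (A : Set E) (z : E) : infDist z A ≤ ‖z‖ + infDist 0 A := by
  simpa [add_comm] using infDist_le_infDist_add_dist (x := z) (y := 0) (s := A)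

theorem abs_infDist_sub_infDist_le (A B : Set E) (z : E) :
    |infDist z A - infDist z B| ≤ ‖z‖ + max (infDist 0 A) (infDist 0 B) := by
  have hA := infDist_le_norm_add_infDist_zero A z
  have hB := infDist_le_norm_add_infDist_zero B z
  exact abs_sub_le_of_nonneg_of_le
    infDist_nonneg (by linarith [le_max_left (infDist 0 A) (infDist 0 B)])
    infDist_nonneg (by linarith [le_max_right (infDist 0 A) (infDist 0 B)])

theorem infDist_le_infDist_add_of_inter_closedBall_subset_s16 [ProperSpace E] {C D : Set E}
    (hC : IsClosed C) (hCne : C.Nonempty) {ε ρ : ℝ}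
    (hCD : C ∩ closedBall 0 ρ ⊆ D + closedBall 0 ε) {z : E} (hz : ‖z‖ + infDist z C ≤ ρ) :
    infDist z D ≤ infDist z C + ε := by
  obtain ⟨a, haC, hza⟩ := hC.exists_infDist_eq_dist hCne z
  have ha : a ∈ closedBall (0 : E) ρ := by
    rw [mem_closedBall, dist_zero_right]
    linarith [norm_le_norm_add_norm_sub' a z, norm_sub_rev a z, dist_eq_norm z a]
  obtain ⟨b, hbD, v, hv, rfl⟩ := hCD ⟨haC, ha⟩
  rw [mem_closedBall, dist_zero_right] at hv
  calc infDist z D ≤ dist z (b + v) + dist (b + v) b :=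
        (infDist_le_dist_of_mem hbD).trans (dist_triangle _ _ _)
    _ ≤ infDist z C + ε := by
        rw [← hza, dist_eq_norm (b + v) b, add_sub_cancel_left]
        linarith

end infDist

section dTrunc

variable {E : Type*} [NormedAddCommGroup E] {A B : Set E}

theorem dTrunc_nonneg (r : ℝ) : 0 ≤ dTrunc A B r :=
  Real.sSup_nonneg <| by
    rintro _ ⟨z, -, rfl⟩
    exact abs_nonneg _

theorem dTrunc_le_of_forall {r c : ℝ} (hc : 0 ≤ c)
    (h : ∀ z ∈ closedBall (0 : E) r, |infDist z A - infDist z B| ≤ c) : dTrunc A B r ≤ c :=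
  Real.sSup_le (by rintro _ ⟨z, hz, rfl⟩; exact h z hz) hc

theorem dTrunc_le_add_max {r : ℝ} (hr : 0 ≤ r) :
    dTrunc A B r ≤ r + max (infDist 0 A) (infDist 0 B) := by
  refine dTrunc_le_of_forall (add_nonneg hr (le_max_of_le_left infDist_nonneg)) fun z hz => ?_
  rw [mem_closedBall, dist_zero_right] at hz
  linarith [abs_infDist_sub_infDist_le A B z]

theorem dTrunc_monotone : Monotone (dTrunc A B) := by
  intro r₁ r₂ h
  rcases lt_or_ge r₁ 0 with hr₁ | hr₁
  · rw [dTrunc, closedBall_eq_empty.2 hr₁, image_empty, Real.sSup_empty]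
    exact dTrunc_nonneg r₂
  · refine csSup_le_csSup ⟨r₂ + max (infDist 0 A) (infDist 0 B), ?_⟩
      ⟨_, 0, mem_closedBall_self hr₁, rfl⟩ (image_mono (closedBall_subset_closedBall h))
    rintro _ ⟨z, hz, rfl⟩
    rw [mem_closedBall, dist_zero_right] at hz
    linarith [abs_infDist_sub_infDist_le A B z]

theorem dTrunc_le_of_inter_closedBall_subset [ProperSpace E] (hA : IsClosed A) (hAne : A.Nonempty)
    (hB : IsClosed B) (hBne : B.Nonempty) {ε ρ r : ℝ} (hε : 0 ≤ ε)
    (hr : 2 * r + max (infDist 0 A) (infDist 0 B) ≤ ρ)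
    (hAB : A ∩ closedBall 0 ρ ⊆ B + closedBall 0 ε)
    (hBA : B ∩ closedBall 0 ρ ⊆ A + closedBall 0 ε) :
    dTrunc A B r ≤ ε := by
  refine dTrunc_le_of_forall hε fun z hz => ?_
  rw [mem_closedBall, dist_zero_right] at hz
  have hzA := infDist_le_norm_add_infDist_zero A z
  have hzB := infDist_le_norm_add_infDist_zero B z
  have hmA := le_max_left (infDist 0 A) (infDist 0 B)
  have hmB := le_max_right (infDist 0 A) (infDist 0 B)
  have h₁ := infDist_le_infDist_add_of_inter_closedBall_subset_s16 hA hAne hAB (z := z) (by linarith)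
  have h₂ := infDist_le_infDist_add_of_inter_closedBall_subset_s16 hB hBne hBA (z := z) (by linarith)
  exact abs_sub_le_iff.2 ⟨by linarith, by linarith⟩

end dTrunc

section integral

theorem integrableOn_and_setIntegral_le_of_nonneg_of_le {f g : ℝ → ℝ} {s : Set ℝ}
    (hf : Measurable f) (hg : IntegrableOn g s) (hs : MeasurableSet s) (hf0 : ∀ r ∈ s, 0 ≤ f r)
    (hfg : ∀ r ∈ s, f r ≤ g r) :
    IntegrableOn f s ∧ ∫ r in s, f r ≤ ∫ r in s, g r := by
  have hf_int : IntegrableOn f s := hg.mono' hf.aestronglyMeasurable <|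
    (ae_restrict_iff' hs).2 <| .of_forall fun r hr => by
      rw [Real.norm_of_nonneg (hf0 r hr)]
      exact hfg r hr
  exact ⟨hf_int, setIntegral_mono_on hf_int hg hs hfg⟩

theorem hasDerivAt_neg_add_one_mul_exp_neg (m r : ℝ) :
    HasDerivAt (fun x => -((x + m + 1) * exp (-x))) ((r + m) * exp (-r)) r := by
  have h := ((((hasDerivAt_id' r).add_const m).add_const 1).mul (hasDerivAt_neg r).exp).neg
  refine h.congr_deriv ?_
  ring

theorem tendsto_neg_add_one_mul_exp_neg (m : ℝ) :
    Tendsto (fun x => -((x + m + 1) * exp (-x))) atTop (nhds 0) := by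
  have h₁ : Tendsto (fun x : ℝ => x * exp (-x)) atTop (nhds 0) := by
    simpa using tendsto_pow_mul_exp_neg_atTop_nhds_zero 1
  have h₂ := tendsto_exp_neg_atTop_nhds_zero.const_mul (m + 1)
  simpa [add_mul, add_assoc] using (h₁.add h₂).neg

theorem integrableOn_Ioi_add_mul_exp_neg {a m : ℝ} (h : 0 ≤ a + m) :
    IntegrableOn (fun r => (r + m) * exp (-r)) (Ioi a) :=
  integrableOn_Ioi_deriv_of_nonneg' (fun r _ => hasDerivAt_neg_add_one_mul_exp_neg m r)
    (fun r hr => mul_nonneg (by linarith [mem_Ioi.1 hr]) (exp_pos _).le)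
    (tendsto_neg_add_one_mul_exp_neg m)

theorem integral_Ioi_add_mul_exp_neg {a m : ℝ} (h : 0 ≤ a + m) :
    ∫ r in Ioi a, (r + m) * exp (-r) = (a + m + 1) * exp (-a) := by
  rw [integral_Ioi_of_hasDerivAt_of_nonneg' (fun r _ => hasDerivAt_neg_add_one_mul_exp_neg m r)
    (fun r hr => mul_nonneg (by linarith [mem_Ioi.1 hr]) (exp_pos _).le)
    (tendsto_neg_add_one_mul_exp_neg m)]
  ring

theorem integral_Ioc_const_mul_exp_neg (ε : ℝ) {ρ : ℝ} (hρ : 0 ≤ ρ) :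
    ∫ r in Ioc 0 ρ, ε * exp (-r) = ε * (1 - exp (-ρ)) := by
  rw [← intervalIntegral.integral_of_le hρ]
  simp

theorem setIntegral_Ioi_mul_exp_neg_le {f : ℝ → ℝ} (hf : Measurable f) {ε ρ m : ℝ}
    (hρ : 0 ≤ ρ) (hm : 0 ≤ m) (hf0 : ∀ r, 0 < r → 0 ≤ f r) (hsmall : ∀ r ∈ Ioc 0 ρ, f r ≤ ε)
    (hlarge : ∀ r, ρ < r → f r ≤ r + m) :
    ∫ r in Ioi 0, f r * exp (-r) ≤ ε * (1 - exp (-ρ)) + (ρ + m + 1) * exp (-ρ) := by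
  have hF : Measurable fun r => f r * exp (-r) := hf.mul (by fun_prop)
  obtain ⟨hint₁, hle₁⟩ := integrableOn_and_setIntegral_le_of_nonneg_of_le hF
    ((by fun_prop : Continuous fun r => ε * exp (-r)).integrableOn_Ioc (a := 0) (b := ρ))
    measurableSet_Ioc (fun r hr => mul_nonneg (hf0 r hr.1) (exp_pos _).le)
    (fun r hr => mul_le_mul_of_nonneg_right (hsmall r hr) (exp_pos _).le)
  obtain ⟨hint₂, hle₂⟩ := integrableOn_and_setIntegral_le_of_nonneg_of_le hF
    (integrableOn_Ioi_add_mul_exp_neg (by linarith)) measurableSet_Ioi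
    (fun r hr => mul_nonneg (hf0 r (hρ.trans_lt hr)) (exp_pos _).le)
    (fun r hr => mul_le_mul_of_nonneg_right (hlarge r hr) (exp_pos _).le)
  rw [← Ioc_union_Ioi_eq_Ioi hρ,
    setIntegral_union Ioc_disjoint_Ioi_same measurableSet_Ioi hint₁ hint₂]
  rw [integral_Ioc_const_mul_exp_neg ε hρ] at hle₁
  rw [integral_Ioi_add_mul_exp_neg (by linarith)] at hle₂
  linarith

end integral

theorem stmt16 (n : ℕ) (A B : Set (EuclideanSpace ℝ (Fin n)))
    (hAne : A.Nonempty) (hAcl : IsClosed A) (hBne : B.Nonempty) (hBcl : IsClosed B)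
    (ε ρbar : ℝ) (hε : 0 ≤ ε) (hρbar : 0 ≤ ρbar)
    (m : ℝ)
    (hm : m = max (Metric.infDist (0 : EuclideanSpace ℝ (Fin n)) A)
      (Metric.infDist (0 : EuclideanSpace ℝ (Fin n)) B))
    (hclose : ∀ ρ : ℝ, ρ ≥ 2 * ρbar + m →
      A ∩ Metric.closedBall (0 : EuclideanSpace ℝ (Fin n)) ρ ⊆
        B + Metric.closedBall (0 : EuclideanSpace ℝ (Fin n)) ε ∧
      B ∩ Metric.closedBall (0 : EuclideanSpace ℝ (Fin n)) ρ ⊆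
        A + Metric.closedBall (0 : EuclideanSpace ℝ (Fin n)) ε) :
    dInt A B ≤ ε * (1 - Real.exp (-ρbar)) + (ρbar + m + 2) * Real.exp (-ρbar) := by
  have hm0 : 0 ≤ m := hm ▸ infDist_nonneg.trans (le_max_left _ _)
  obtain ⟨hAB, hBA⟩ := hclose (2 * ρbar + m) le_rfl
  have hsmall : ∀ r ∈ Ioc 0 ρbar, dTrunc A B r ≤ ε := fun r hr =>
    dTrunc_le_of_inter_closedBall_subset hAcl hAne hBcl hBne hε (by linarith [hr.2]) hAB hBA
  have hlarge : ∀ r, ρbar < r → dTrunc A B r ≤ r + m := fun r hr =>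
    hm ▸ dTrunc_le_add_max (by linarith)
  have h := setIntegral_Ioi_mul_exp_neg_le dTrunc_monotone.measurable hρbar hm0
    (fun r _ => dTrunc_nonneg r) hsmall hlarge
  rw [dInt]
  linarith [exp_pos (-ρbar)]
end
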